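/- arXiv:2502.06363 — 2 statements merged into one kernel-verified Lean document; each statement's English description precedes it below -/
import Mathlib

section
/- Fix d ∈ ℕ+, ν > 1/2, α > 0 and constants C > 0, C̄ > 0. Assume the Matérn-type information-gain bound: for every m ∈ ℕ+, every λ > 0 and every m-tuple Z of points of 𝒳, I_{λ²I_m}(Z) ≤ C̄·(m/λ²)^{d/(2ν+d)}·(ln(1 + m/λ²))^{2ν/(2ν+d)}. Let (λ̄_T)_{T∈ℕ+} be nonnegative reals (possibly zero) with λ̄_T² < C·T^{−2ν/d}·(ln(1+T))^{2ν(1+α)/d} for all T ∈ ℕ+, and for each T let x_{T,1},…,x_{T,T} ∈ 𝒳̃ (a nonempty subset of 𝒳) be chosen by maximum variance reduction with noise level λ̄_T²: for every t ∈ [T] and x ∈ 𝒳̃, σ_{λ̄_T²I_{t−1}}(x; X_{T,t−1}) ≤ σ_{λ̄_T²I_{t−1}}(x_{T,t}; X_{T,t−1}), where additionally K(X_{T,t},X_{T,t}) + λ̄_T²I_t is assumed invertible for every t ≤ T. Then there exist T̄ ∈ ℕ with T̄ ≥ 2 and C' > 0, depending only on C, C̄, α, d, ν, such that for every T ≥ T̄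 and every x ∈ 𝒳̃: σ_{λ̄_T²I_T}(x; X_{T,T}) ≤ C'·T^{−ν/d}·(ln T)^{ν(1+α)/d}. -/
open Matrix Real Finset

noncomputable section

universe u

/-- Gram (kernel) matrix of a finite tuple of points. -/
def gramMat {𝒳 : Type u} (k : 𝒳 → 𝒳 → ℝ) {m : ℕ} (X : Fin m → 𝒳) :
    Matrix (Fin m) (Fin m) ℝ :=
  Matrix.of fun i j => k (X i) (X j)

/-- Kernel vector `k(x, X)`. -/
def kVec {𝒳 : Type u} (k : 𝒳 → 𝒳 → ℝ) {m : ℕ} (X : Fin m → 𝒳) (x : 𝒳) : Fin m → ℝ :=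
  fun i => k x (X i)

/-- Posterior variance `σ²_Σ(x; X)`. -/
def postVar {𝒳 : Type u} (k : 𝒳 → 𝒳 → ℝ) {m : ℕ} (S : Matrix (Fin m) (Fin m) ℝ)
    (X : Fin m → 𝒳) (x : 𝒳) : ℝ :=
  k x x - kVec k X x ⬝ᵥ ((gramMat k X + S)⁻¹ *ᵥ kVec k X x)

/-- Posterior standard deviation `σ_Σ(x; X)`. -/
def postStd {𝒳 : Type u} (k : 𝒳 → 𝒳 → ℝ) {m : ℕ} (S : Matrix (Fin m) (Fin m) ℝ)
    (X : Fin m → 𝒳) (x : 𝒳) : ℝ :=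
  Real.sqrt (postVar k S X x)

/-- Posterior mean `μ_Σ(x; X, y)`. -/
def postMean {𝒳 : Type u} (k : 𝒳 → 𝒳 → ℝ) {m : ℕ} (S : Matrix (Fin m) (Fin m) ℝ)
    (X : Fin m → 𝒳) (y : Fin m → ℝ) (x : 𝒳) : ℝ :=
  kVec k X x ⬝ᵥ ((gramMat k X + S)⁻¹ *ᵥ y)

/-- Information gain `I_Σ(Z)`. -/
def infoGain {𝒳 : Type u} (k : 𝒳 → 𝒳 → ℝ) {m : ℕ} (S : Matrix (Fin m) (Fin m) ℝ)
    (Z : Fin m → 𝒳) : ℝ :=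
  (1 / 2) * Real.log ((S + gramMat k Z).det / S.det)

/-- `k` is a symmetric positive semidefinite kernel. -/
def IsKernel {𝒳 : Type u} (k : 𝒳 → 𝒳 → ℝ) : Prop :=
  (∀ x y, k x y = k y x) ∧ ∀ (m : ℕ) (Z : Fin m → 𝒳), (gramMat k Z).PosSemidef

/-- Prefix of length `t` of a sequence of points. -/
def preT {𝒳 : Type u} (x : ℕ → 𝒳) (t : ℕ) : Fin t → 𝒳 := fun i => x i.val

/-!
Compare the MVR points with the noise level `c_T = C T^(-2ν/d) log(1+T)^(2ν(1+α)/d)`, which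
exceeds `λ̄_T²`. By the Schur complement, `det(K(X_T) + c I)` factors as
`∏_t (c + σ_c²(x_{t+1}; X_t))`, so if every step had `σ_c²(x_{t+1}; X_t) > c`, the information gain
`I_{cI}(X_T)` would be at least `T log 2 / 2`. The Matérn bound makes `I_{cI}(X_T)` of order
`T log(1+T)^(-2να/(2ν+d)) = o(T)`, so some step `t < T` has `σ_c²(x_{t+1}; X_t) ≤ c`. Posterior
variance decreases as data is added and increases with the noise level, and `x_{t+1}` maximises
it, so `σ²(x; X_T) ≤ σ²(x; X_t) ≤ σ²(x_{t+1}; X_t) ≤ σ_c²(x_{t+1}; X_t) ≤ c`. Finally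
`√c_T` has the claimed rate because `log(1+T) ≤ 2 log T`.
-/

open Filter Topology

namespace IsKernel

variable {𝒳 : Type u} {k : 𝒳 → 𝒳 → ℝ}

theorem posSemidef_gramMat_add_smul_one (hk : IsKernel k) {m : ℕ} (X : Fin m → 𝒳) {c : ℝ}
    (hc : 0 ≤ c) : (gramMat k X + c • (1 : Matrix (Fin m) (Fin m) ℝ)).PosSemidef :=
  PosSemidef.add (hk.2 m X) (PosSemidef.one.smul hc)

theorem posDef_gramMat_add_smul_one (hk : IsKernel k) {m : ℕ} (X : Fin m → 𝒳) {c : ℝ}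
    (hc : 0 < c) : (gramMat k X + c • (1 : Matrix (Fin m) (Fin m) ℝ)).PosDef :=
  PosDef.posSemidef_add (hk.2 m X) (PosDef.one.smul hc)

end IsKernel

theorem Matrix.PosSemidef.two_mul_dotProduct_sub_le {n : Type*} [Fintype n] [DecidableEq n]
    {A : Matrix n n ℝ} (hA : A.PosSemidef) (hdet : A.det ≠ 0) (w z : n → ℝ) :
    2 * (z ⬝ᵥ w) - z ⬝ᵥ (A *ᵥ z) ≤ w ⬝ᵥ (A⁻¹ *ᵥ w) := by
  set u := A⁻¹ *ᵥ w
  have hAu : A *ᵥ u = w := by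
    rw [mulVec_mulVec, mul_nonsing_inv _ (isUnit_iff_ne_zero.mpr hdet), one_mulVec]
  have hsymm : ∀ v, v ⬝ᵥ (A *ᵥ z) = z ⬝ᵥ (A *ᵥ v) := fun v => by
    rw [dotProduct_mulVec, ← mulVec_transpose, ← conjTranspose_eq_transpose_of_trivial,
      hA.isHermitian.eq, dotProduct_comm]
  have hnonneg := hA.dotProduct_mulVec_nonneg (z - u)
  simp only [star_trivial, mulVec_sub, hAu, dotProduct_sub, sub_dotProduct] at hnonneg
  rw [hsymm u, hAu, dotProduct_comm u w] at hnonneg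
  linarith

section PosteriorVariance

variable {𝒳 : Type u} {k : 𝒳 → 𝒳 → ℝ}

theorem postVar_le_postVar_of_noise_le (hk : IsKernel k) {m : ℕ} (X : Fin m → 𝒳) (x : 𝒳)
    {c c' : ℝ} (hc : 0 ≤ c) (hcc' : c ≤ c')
    (hdet : (gramMat k X + c • (1 : Matrix (Fin m) (Fin m) ℝ)).det ≠ 0)
    (hdet' : (gramMat k X + c' • (1 : Matrix (Fin m) (Fin m) ℝ)).det ≠ 0) :
    postVar k (c • (1 : Matrix (Fin m) (Fin m) ℝ)) X x
      ≤ postVar k (c' • (1 : Matrix (Fin m) (Fin m) ℝ)) X x := by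
  unfold postVar
  set v := kVec k X x
  set z := (gramMat k X + c' • (1 : Matrix (Fin m) (Fin m) ℝ))⁻¹ *ᵥ v
  have hz : (gramMat k X + c' • (1 : Matrix (Fin m) (Fin m) ℝ)) *ᵥ z = v := by
    rw [mulVec_mulVec, mul_nonsing_inv _ (isUnit_iff_ne_zero.mpr hdet'), one_mulVec]
  -- evaluate the variational bound for noise `c` at the minimiser `z` for noise `c'`
  have hquad := (hk.posSemidef_gramMat_add_smul_one X hc).two_mul_dotProduct_sub_le hdet v z
  have hsplit : z ⬝ᵥ ((gramMat k X + c • (1 : Matrix (Fin m) (Fin m) ℝ)) *ᵥ z)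
      = z ⬝ᵥ v - (c' - c) * (z ⬝ᵥ z) := by
    rw [← hz]
    simp only [add_mulVec, smul_mulVec, one_mulVec, dotProduct_add, dotProduct_smul,
      smul_eq_mul]
    ring
  have hzz : 0 ≤ z ⬝ᵥ z := by simpa using dotProduct_star_self_nonneg z
  have hzv : v ⬝ᵥ z = z ⬝ᵥ v := dotProduct_comm _ _
  nlinarith

theorem postVar_le_postVar_castSucc (hk : IsKernel k) {m : ℕ} (X : Fin (m + 1) → 𝒳) (x : 𝒳)
    {c : ℝ} (hc : 0 ≤ c)
    (hdet : (gramMat k (X ∘ Fin.castSucc) + c • (1 : Matrix (Fin m) (Fin m) ℝ)).det ≠ 0)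
    (hdet' : (gramMat k X + c • (1 : Matrix (Fin (m + 1)) (Fin (m + 1)) ℝ)).det ≠ 0) :
    postVar k (c • (1 : Matrix (Fin (m + 1)) (Fin (m + 1)) ℝ)) X x
      ≤ postVar k (c • (1 : Matrix (Fin m) (Fin m) ℝ)) (X ∘ Fin.castSucc) x := by
  unfold postVar
  set P := gramMat k (X ∘ Fin.castSucc) + c • (1 : Matrix (Fin m) (Fin m) ℝ)
  set v := kVec k (X ∘ Fin.castSucc) x
  set z := P⁻¹ *ᵥ v
  have hz : P *ᵥ z = v := by
    rw [mulVec_mulVec, mul_nonsing_inv _ (isUnit_iff_ne_zero.mpr hdet), one_mulVec]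
  -- extending `z` by zero turns the quadratic bound for the larger matrix into one for `P`
  have hquad := (hk.posSemidef_gramMat_add_smul_one X hc).two_mul_dotProduct_sub_le hdet'
    (kVec k X x) (Fin.snoc z 0)
  have hlin : (Fin.snoc z 0 : Fin (m + 1) → ℝ) ⬝ᵥ kVec k X x = z ⬝ᵥ v := by
    simp [dotProduct, Fin.sum_univ_castSucc, kVec, v]
  have hquad' : (Fin.snoc z 0 : Fin (m + 1) → ℝ) ⬝ᵥ
      ((gramMat k X + c • (1 : Matrix (Fin (m + 1)) (Fin (m + 1)) ℝ)) *ᵥ Fin.snoc z 0)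
      = z ⬝ᵥ (P *ᵥ z) := by
    simp [dotProduct, mulVec, Fin.sum_univ_castSucc, P, gramMat, one_apply]
  rw [hlin, hquad', hz, dotProduct_comm z] at hquad
  linarith

theorem postVar_preT_le_of_le (hk : IsKernel k) (xs : ℕ → 𝒳) (x : 𝒳) {c : ℝ} (hc : 0 ≤ c)
    {t s : ℕ} (hts : t ≤ s)
    (hdet : ∀ r ≤ s, (gramMat k (preT xs r) + c • (1 : Matrix (Fin r) (Fin r) ℝ)).det ≠ 0) :
    postVar k (c • (1 : Matrix (Fin s) (Fin s) ℝ)) (preT xs s) x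
      ≤ postVar k (c • (1 : Matrix (Fin t) (Fin t) ℝ)) (preT xs t) x := by
  induction s, hts using Nat.le_induction with
  | base => exact le_rfl
  | succ s _ ih =>
    exact (postVar_le_postVar_castSucc hk (preT xs (s + 1)) x hc (hdet s (by omega))
      (hdet (s + 1) le_rfl)).trans (ih fun r hr => hdet r (by omega))

theorem det_gramMat_add_smul_one_succ (hk : IsKernel k) {m : ℕ} (X : Fin (m + 1) → 𝒳) {c : ℝ}
    (hdet : (gramMat k (X ∘ Fin.castSucc) + c • (1 : Matrix (Fin m) (Fin m) ℝ)).det ≠ 0) :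
    (gramMat k X + c • (1 : Matrix (Fin (m + 1)) (Fin (m + 1)) ℝ)).det
      = (gramMat k (X ∘ Fin.castSucc) + c • (1 : Matrix (Fin m) (Fin m) ℝ)).det
        * (c + postVar k (c • (1 : Matrix (Fin m) (Fin m) ℝ)) (X ∘ Fin.castSucc)
            (X (Fin.last m))) := by
  set P := gramMat k (X ∘ Fin.castSucc) + c • (1 : Matrix (Fin m) (Fin m) ℝ)
  set v := kVec k (X ∘ Fin.castSucc) (X (Fin.last m))
  have : Invertible P := P.invertibleOfIsUnitDet (isUnit_iff_ne_zero.mpr hdet)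
  have hleft (i : Fin m) : finSumFinEquiv (Sum.inl i) = i.castSucc := rfl
  have hright (i : Fin 1) : finSumFinEquiv (Sum.inr i) = Fin.last m := by
    rw [Fin.fin_one_eq_zero i]; rfl
  have hblocks : (gramMat k X + c • (1 : Matrix (Fin (m + 1)) (Fin (m + 1)) ℝ)).submatrix
      finSumFinEquiv finSumFinEquiv = fromBlocks P (replicateCol (Fin 1) v)
        (replicateRow (Fin 1) v) (of fun _ _ => k (X (Fin.last m)) (X (Fin.last m)) + c) := by
    ext (i | i) (j | j)
    · simp [P, gramMat, one_apply, hleft]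
    · simp only [gramMat, submatrix_apply, hleft, hright, Matrix.add_apply, of_apply,
        Matrix.smul_apply, one_apply, Fin.castSucc_ne_last, ↓reduceIte, smul_eq_mul, mul_zero,
        add_zero, fromBlocks_apply₁₂, replicateCol_apply, kVec, Function.comp_apply, v]
      exact hk.1 _ _
    · simp [v, gramMat, kVec, one_apply, hleft, hright, (Fin.castSucc_ne_last _).symm]
    · simp [gramMat, hright]
  rw [← det_submatrix_equiv_self finSumFinEquiv, hblocks, det_fromBlocks₁₁, invOf_eq_nonsing_inv,
    det_fin_one, Matrix.mul_assoc, ← replicateCol_mulVec]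
  congr 1
  simp only [Matrix.sub_apply, of_apply, replicateRow_mul_replicateCol_apply, postVar, v, P]
  ring

theorem det_gramMat_preT_add_smul_one (hk : IsKernel k) (xs : ℕ → 𝒳) {c : ℝ} (hc : 0 < c)
    (T : ℕ) :
    (gramMat k (preT xs T) + c • (1 : Matrix (Fin T) (Fin T) ℝ)).det
      = ∏ t ∈ range T, (c + postVar k (c • (1 : Matrix (Fin t) (Fin t) ℝ)) (preT xs t) (xs t)) := by
  induction T with
  | zero => simp
  | succ T ih =>
    rw [prod_range_succ, ← ih]
    exact det_gramMat_add_smul_one_succ hk (preT xs (T + 1))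
      (hk.posDef_gramMat_add_smul_one _ hc).det_pos.ne'

theorem infoGain_preT_ge_of_lt_postVar (hk : IsKernel k) (xs : ℕ → 𝒳) {c : ℝ} (hc : 0 < c)
    {T : ℕ}
    (hvar : ∀ t < T, c < postVar k (c • (1 : Matrix (Fin t) (Fin t) ℝ)) (preT xs t) (xs t)) :
    T * log 2 / 2 ≤ infoGain k (c • (1 : Matrix (Fin T) (Fin T) ℝ)) (preT xs T) := by
  have hdet : (2 * c) ^ T ≤ (c • (1 : Matrix (Fin T) (Fin T) ℝ) + gramMat k (preT xs T)).det := by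
    rw [add_comm, det_gramMat_preT_add_smul_one hk xs hc]
    calc (2 * c) ^ T = ∏ _t ∈ range T, 2 * c := by rw [prod_const, card_range]
      _ ≤ _ := prod_le_prod (fun _ _ => by positivity) fun t ht => by
          linarith [hvar t (mem_range.1 ht)]
  have hratio : (2 : ℝ) ^ T
      ≤ (c • (1 : Matrix (Fin T) (Fin T) ℝ) + gramMat k (preT xs T)).det
        / (c • (1 : Matrix (Fin T) (Fin T) ℝ)).det := by
    rwa [det_smul, det_one, mul_one, Fintype.card_fin, le_div_iff₀ (by positivity), ← mul_pow]
  have hlog := log_le_log (by positivity) hratio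
  rw [log_pow] at hlog
  unfold infoGain
  linarith

theorem postStd_preT_le_sqrt_of_infoGain_lt (hk : IsKernel k) (xs : ℕ → 𝒳) (x : 𝒳) {c₀ c : ℝ}
    (hc₀ : 0 ≤ c₀) (hc₀c : c₀ ≤ c) (hc : 0 < c) {T : ℕ}
    (hdet : ∀ t ≤ T, (gramMat k (preT xs t) + c₀ • (1 : Matrix (Fin t) (Fin t) ℝ)).det ≠ 0)
    (hmvr : ∀ t < T, postStd k (c₀ • (1 : Matrix (Fin t) (Fin t) ℝ)) (preT xs t) x
      ≤ postStd k (c₀ • (1 : Matrix (Fin t) (Fin t) ℝ)) (preT xs t) (xs t))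
    (hgain : infoGain k (c • (1 : Matrix (Fin T) (Fin T) ℝ)) (preT xs T) < T * log 2 / 2) :
    postStd k (c₀ • (1 : Matrix (Fin T) (Fin T) ℝ)) (preT xs T) x ≤ √c := by
  obtain ⟨t, htT, hvar⟩ :
      ∃ t < T, postVar k (c • (1 : Matrix (Fin t) (Fin t) ℝ)) (preT xs t) (xs t) ≤ c := by
    by_contra! h
    exact hgain.not_ge (infoGain_preT_ge_of_lt_postVar hk xs hc h)
  calc postStd k (c₀ • 1) (preT xs T) x
      ≤ postStd k (c₀ • 1) (preT xs t) x :=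
        sqrt_le_sqrt (postVar_preT_le_of_le hk xs x hc₀ htT.le hdet)
    _ ≤ postStd k (c₀ • 1) (preT xs t) (xs t) := hmvr t htT
    _ ≤ postStd k (c • 1) (preT xs t) (xs t) :=
        sqrt_le_sqrt (postVar_le_postVar_of_noise_le hk _ _ hc₀ hc₀c (hdet t htT.le)
          (hk.posDef_gramMat_add_smul_one _ hc).det_pos.ne')
    _ ≤ √c := sqrt_le_sqrt hvar

end PosteriorVariance

-- The bound on `λ̄_T²`, used as the comparison noise level `c_T`.
def noiseThreshold (C ν α d : ℝ) (T : ℕ) : ℝ :=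
  C * (T : ℝ) ^ (-(2 * ν) / d) * (Real.log (1 + (T : ℝ))) ^ (2 * ν * (1 + α) / d)

-- The Matérn information-gain bound as a function of `x = m / λ²`.
def maternGainBound (Cb ν d x : ℝ) : ℝ :=
  Cb * x ^ (d / (2 * ν + d)) * (Real.log (1 + x)) ^ (2 * ν / (2 * ν + d))

section Asymptotics

variable {C ν α d : ℝ}

theorem one_le_log_one_add_natCast {T : ℕ} (hT : 2 ≤ T) : 1 ≤ log (1 + T) := by
  have : (3 : ℝ) ≤ 1 + T := by norm_cast; omega
  rw [le_log_iff_exp_le (by positivity)]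
  linarith [exp_one_lt_d9]

theorem noiseThreshold_pos (hC : 0 < C) {T : ℕ} (hT : 0 < T) : 0 < noiseThreshold C ν α d T := by
  have : 0 < log (1 + T) := log_pos (by norm_cast; omega)
  unfold noiseThreshold
  positivity

theorem div_noiseThreshold_eq (hC : 0 < C) (hd : 0 < d) {T : ℕ} (hT : 0 < T) :
    T / noiseThreshold C ν α d T
      = C⁻¹ * (T : ℝ) ^ ((2 * ν + d) / d) * log (1 + T) ^ (-(2 * ν * (1 + α) / d)) := by
  have hT' : (0 : ℝ) < T := by exact_mod_cast hT
  have hL : 0 < log (1 + T) := log_pos (by linarith)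
  have hexp : (2 * ν + d) / d = 1 + -(-(2 * ν) / d) := by field_simp; ring
  rw [noiseThreshold, hexp, rpow_add hT', rpow_one, rpow_neg hT'.le, rpow_neg hL.le]
  field_simp

theorem div_noiseThreshold_rpow (hC : 0 < C) (hν : 0 < ν) (hd : 0 < d) {T : ℕ} (hT : 0 < T) :
    ((T : ℝ) / noiseThreshold C ν α d T) ^ (d / (2 * ν + d))
      = C ^ (-(d / (2 * ν + d))) * T * log (1 + T) ^ (-(2 * ν * (1 + α) / (2 * ν + d))) := by
  have hT' : (0 : ℝ) < T := by exact_mod_cast hT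
  have hL : 0 < log (1 + T) := log_pos (by linarith)
  rw [div_noiseThreshold_eq hC hd hT, mul_rpow (by positivity) (by positivity),
    mul_rpow (by positivity) (by positivity), inv_rpow hC.le, ← rpow_neg hC.le,
    ← rpow_mul hT'.le, ← rpow_mul hL.le]
  congr
  · rw [div_mul_div_cancel₀ hd.ne', div_self (by positivity), rpow_one]
  · field_simp

theorem log_one_add_div_noiseThreshold_le (hC : 0 < C) (hν : 0 < ν) (hα : -1 ≤ α) (hd : 0 < d)
    {T : ℕ} (hT : 2 ≤ T) :
    log (1 + T / noiseThreshold C ν α d T) ≤ (log (1 + C⁻¹) + (2 * ν + d) / d) * log (1 + T) := by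
  have hT' : (0 : ℝ) < T := by norm_cast; omega
  have hL := one_le_log_one_add_natCast hT
  have hr : 0 ≤ (2 * ν + d) / d := by positivity
  have hgrowth : (T : ℝ) ^ ((2 * ν + d) / d) ≤ (1 + T) ^ ((2 * ν + d) / d) :=
    rpow_le_rpow hT'.le (by linarith) hr
  have hone : 1 ≤ (1 + (T : ℝ)) ^ ((2 * ν + d) / d) := one_le_rpow (by linarith) hr
  have hdecay : log (1 + T) ^ (-(2 * ν * (1 + α) / d)) ≤ 1 :=
    rpow_le_one_of_one_le_of_nonpos hL (neg_nonpos.2 (div_nonneg (by nlinarith) hd.le))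
  have hbound : 1 + T / noiseThreshold C ν α d T ≤ (1 + C⁻¹) * (1 + T) ^ ((2 * ν + d) / d) := by
    rw [div_noiseThreshold_eq hC hd (by omega)]
    calc 1 + C⁻¹ * (T : ℝ) ^ ((2 * ν + d) / d) * log (1 + T) ^ (-(2 * ν * (1 + α) / d))
        ≤ 1 + C⁻¹ * (1 + T) ^ ((2 * ν + d) / d) * 1 := by gcongr
      _ ≤ (1 + C⁻¹) * (1 + T) ^ ((2 * ν + d) / d) := by nlinarith [inv_pos.2 hC]
  have hlogC : 0 ≤ log (1 + C⁻¹) := log_nonneg (by linarith [inv_pos.2 hC])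
  have hc : 0 < noiseThreshold C ν α d T := noiseThreshold_pos hC (by omega)
  calc log (1 + T / noiseThreshold C ν α d T)
      ≤ log ((1 + C⁻¹) * (1 + T) ^ ((2 * ν + d) / d)) :=
        log_le_log (by positivity) hbound
    _ = log (1 + C⁻¹) + (2 * ν + d) / d * log (1 + T) := by
        rw [log_mul (by positivity) (by positivity), log_rpow (by positivity)]
    _ ≤ (log (1 + C⁻¹) + (2 * ν + d) / d) * log (1 + T) := by nlinarith

theorem maternGainBound_div_noiseThreshold_le {Cb : ℝ} (hCb : 0 ≤ Cb) (hC : 0 < C) (hν : 0 < ν)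
    (hα : -1 ≤ α) (hd : 0 < d) {T : ℕ} (hT : 2 ≤ T) :
    maternGainBound Cb ν d (T / noiseThreshold C ν α d T)
      ≤ Cb * C ^ (-(d / (2 * ν + d))) * (log (1 + C⁻¹) + (2 * ν + d) / d) ^ (2 * ν / (2 * ν + d))
        * T * log (1 + T) ^ (-(2 * ν * α / (2 * ν + d))) := by
  have hT' : (0 : ℝ) < T := by norm_cast; omega
  have hL : 0 < log (1 + T) := log_pos (by linarith)
  have hc : 0 < noiseThreshold C ν α d T := noiseThreshold_pos hC (by omega)
  have hlog := log_one_add_div_noiseThreshold_le hC hν hα hd hT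
  have hconst : 0 ≤ log (1 + C⁻¹) + (2 * ν + d) / d := by
    have := log_nonneg (by linarith [inv_pos.2 hC] : 1 ≤ 1 + C⁻¹)
    positivity
  have hexp : log (1 + T) ^ (-(2 * ν * (1 + α) / (2 * ν + d))) * log (1 + T) ^ (2 * ν / (2 * ν + d))
      = log (1 + T) ^ (-(2 * ν * α / (2 * ν + d))) := by
    rw [← rpow_add hL]
    congr 1
    field_simp
    ring
  unfold maternGainBound
  rw [div_noiseThreshold_rpow hC hν hd (by omega)]
  calc Cb * (C ^ (-(d / (2 * ν + d))) * T * log (1 + T) ^ (-(2 * ν * (1 + α) / (2 * ν + d))))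
        * log (1 + T / noiseThreshold C ν α d T) ^ (2 * ν / (2 * ν + d))
      ≤ Cb * (C ^ (-(d / (2 * ν + d))) * T * log (1 + T) ^ (-(2 * ν * (1 + α) / (2 * ν + d))))
        * ((log (1 + C⁻¹) + (2 * ν + d) / d) * log (1 + T)) ^ (2 * ν / (2 * ν + d)) := by
        gcongr
        exact log_nonneg (by have := div_pos hT' hc; linarith)
    _ = _ := by
        rw [mul_rpow hconst hL.le, ← hexp]
        ring

theorem eventually_maternGainBound_div_noiseThreshold_lt {Cb : ℝ} (hCb : 0 ≤ Cb) (hC : 0 < C)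
    (hν : 0 < ν) (hα : 0 < α) (hd : 0 < d) :
    ∀ᶠ T : ℕ in atTop, maternGainBound Cb ν d (T / noiseThreshold C ν α d T) < T * log 2 / 2 := by
  set K := Cb * C ^ (-(d / (2 * ν + d)))
    * (log (1 + C⁻¹) + (2 * ν + d) / d) ^ (2 * ν / (2 * ν + d))
  have hdecay : Tendsto (fun T : ℕ => K * log (1 + T) ^ (-(2 * ν * α / (2 * ν + d)))) atTop
      (𝓝 0) := by
    have hlog : Tendsto (fun T : ℕ => log (1 + T)) atTop atTop :=
      tendsto_log_atTop.comp (tendsto_atTop_add_const_left _ 1 tendsto_natCast_atTop_atTop)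
    simpa using ((tendsto_rpow_neg_atTop (by positivity)).comp hlog).const_mul K
  filter_upwards [hdecay.eventually (gt_mem_nhds (by positivity : 0 < log 2 / 2)),
    eventually_ge_atTop 2] with T hsmall hT
  have hT' : (0 : ℝ) < T := by norm_cast; omega
  calc maternGainBound Cb ν d (T / noiseThreshold C ν α d T)
      ≤ K * T * log (1 + T) ^ (-(2 * ν * α / (2 * ν + d))) :=
        maternGainBound_div_noiseThreshold_le hCb hC hν (by linarith) hd hT
    _ = T * (K * log (1 + T) ^ (-(2 * ν * α / (2 * ν + d)))) := by ring
    _ < T * (log 2 / 2) := by gcongr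
    _ = T * log 2 / 2 := by ring

theorem sqrt_noiseThreshold_le (hC : 0 ≤ C) (hexp : 0 ≤ ν * (1 + α) / d) {T : ℕ} (hT : 2 ≤ T) :
    √(noiseThreshold C ν α d T)
      ≤ √C * 2 ^ (ν * (1 + α) / d) * (T : ℝ) ^ (-(ν / d)) * log T ^ (ν * (1 + α) / d) := by
  have hT' : (2 : ℝ) ≤ T := by exact_mod_cast hT
  have hL : 0 ≤ log (1 + T) := log_nonneg (by linarith)
  have hlogT : 0 ≤ log T := log_nonneg (by linarith)
  have hL2 : log (1 + T) ≤ 2 * log T := by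
    have h : log (1 + T) ≤ log ((T : ℝ) ^ 2) := log_le_log (by linarith) (by nlinarith)
    rwa [log_pow, Nat.cast_ofNat] at h
  have hsqrt : √(noiseThreshold C ν α d T)
      = √C * (T : ℝ) ^ (-(ν / d)) * log (1 + T) ^ (ν * (1 + α) / d) := by
    rw [noiseThreshold, sqrt_mul (by positivity), sqrt_mul hC, sqrt_eq_rpow ((T : ℝ) ^ _),
      sqrt_eq_rpow (log (1 + T) ^ _), ← rpow_mul (by positivity), ← rpow_mul hL,
      show -(2 * ν) / d * (1 / 2) = -(ν / d) by ring,
      show 2 * ν * (1 + α) / d * (1 / 2) = ν * (1 + α) / d by ring]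
  calc √(noiseThreshold C ν α d T)
      = √C * (T : ℝ) ^ (-(ν / d)) * log (1 + T) ^ (ν * (1 + α) / d) := hsqrt
    _ ≤ √C * (T : ℝ) ^ (-(ν / d)) * (2 * log T) ^ (ν * (1 + α) / d) := by gcongr
    _ = √C * 2 ^ (ν * (1 + α) / d) * (T : ℝ) ^ (-(ν / d)) * log T ^ (ν * (1 + α) / d) := by
        rw [mul_rpow zero_le_two hlogT]
        ring

end Asymptotics

/-- MVR posterior-standard-deviation bound in the near-noiseless regime
under the Matérn-type information-gain bound; `T̄` and `C'` depend only on
`C`, `C̄`, `α`, `d`, `ν`. -/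
theorem mvr_posterior_std_bound_Matern_noiseless
    (d : ℕ) (hd : 0 < d) (ν : ℝ) (hν : 1 / 2 < ν) (α : ℝ) (hα : 0 < α)
    (C : ℝ) (hC : 0 < C) (Cb : ℝ) (hCb : 0 < Cb) :
    ∃ Tb : ℕ, 2 ≤ Tb ∧ ∃ C' : ℝ, 0 < C' ∧
      ∀ (𝒳 : Type u) (k : 𝒳 → 𝒳 → ℝ), IsKernel k →
      (∀ m : ℕ, 0 < m → ∀ l : ℝ, 0 < l → ∀ Z : Fin m → 𝒳,
        infoGain k ((l ^ 2) • (1 : Matrix (Fin m) (Fin m) ℝ)) Z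
          ≤ Cb * ((m : ℝ) / l ^ 2) ^ ((d : ℝ) / (2 * ν + (d : ℝ)))
              * (Real.log (1 + (m : ℝ) / l ^ 2)) ^ (2 * ν / (2 * ν + (d : ℝ)))) →
      ∀ lamBar : ℕ → ℝ, (∀ T, 0 ≤ lamBar T) →
      (∀ T : ℕ, 0 < T →
        lamBar T ^ 2 < C * (T : ℝ) ^ (-(2 * ν) / (d : ℝ))
            * (Real.log (1 + (T : ℝ))) ^ (2 * ν * (1 + α) / (d : ℝ))) →
      ∀ Xtil : Set 𝒳, Xtil.Nonempty →
      ∀ xs : ℕ → ℕ → 𝒳,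
      (∀ T, 0 < T → ∀ t < T, xs T t ∈ Xtil) →
      (∀ T, 0 < T → ∀ t ≤ T,
        (gramMat k (preT (xs T) t)
          + (lamBar T ^ 2) • (1 : Matrix (Fin t) (Fin t) ℝ)).det ≠ 0) →
      (∀ T, 0 < T → ∀ t < T, ∀ x ∈ Xtil,
        postStd k ((lamBar T ^ 2) • (1 : Matrix (Fin t) (Fin t) ℝ)) (preT (xs T) t) x
          ≤ postStd k ((lamBar T ^ 2) • (1 : Matrix (Fin t) (Fin t) ℝ)) (preT (xs T) t)
              (xs T t)) →
      ∀ T, Tb ≤ T → ∀ x ∈ Xtil,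
        postStd k ((lamBar T ^ 2) • (1 : Matrix (Fin T) (Fin T) ℝ)) (preT (xs T) T) x
          ≤ C' * (T : ℝ) ^ (-(ν / (d : ℝ)))
              * (Real.log (T : ℝ)) ^ (ν * (1 + α) / (d : ℝ)) := by
  have hν₀ : 0 < ν := by linarith
  have hd₀ : (0 : ℝ) < d := by exact_mod_cast hd
  obtain ⟨N, hN⟩ :=
    eventually_atTop.1 (eventually_maternGainBound_div_noiseThreshold_lt hCb.le hC hν₀ hα hd₀)
  refine ⟨max 2 N, le_max_left _ _, √C * 2 ^ (ν * (1 + α) / (d : ℝ)), by positivity, ?_⟩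
  intro 𝒳 k hk hgain lamBar _ hlam Xtil _ xs _ hdet hmvr T hT x hx
  have hT₀ : 0 < T := by omega
  have hc : 0 < noiseThreshold C ν α d T := noiseThreshold_pos hC hT₀
  have hgainT : infoGain k (noiseThreshold C ν α d T • (1 : Matrix (Fin T) (Fin T) ℝ))
      (preT (xs T) T) < T * log 2 / 2 := by
    have h := hgain T hT₀ _ (sqrt_pos.2 hc) (preT (xs T) T)
    rw [sq_sqrt hc.le] at h
    exact h.trans_lt (hN T (le_of_max_le_right hT))
  calc postStd k ((lamBar T ^ 2) • (1 : Matrix (Fin T) (Fin T) ℝ)) (preT (xs T) T) x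
      ≤ √(noiseThreshold C ν α d T) :=
        postStd_preT_le_sqrt_of_infoGain_lt hk (xs T) x (sq_nonneg _) (hlam T hT₀).le hc
          (hdet T hT₀) (fun t ht => hmvr T hT₀ t ht x hx) hgainT
    _ ≤ _ := sqrt_noiseThreshold_le hC.le (by positivity) (le_of_max_le_left hT)
end
end

section
/- (Information-gain bound on accumulated posterior standard deviations.) Let x_1,…,x_T ∈ 𝒳, let λ_1,…,λ_T > 0, set Σ_t := diag(λ_1²,…,λ_t²) and X_t := (x_1,…,x_t), and let 𝒯 := {t ∈ [T] : σ_{Σ_{t−1}}(x_t; X_{t−1}) ≤ λ_t}. If γ ≥ I_{Σ_T}(X_T), then Σ_{t∈𝒯} σ_{Σ_{t−1}}(x_t; X_{t−1}) ≤ 2·√( (Σ_{t=1}^T λ_t²)·γ ). -/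
open Matrix Real Finset

noncomputable section

universe u

/-!
Bordering `K(X_t, X_t) + Σ_t` by the point `x_t` and the noise `λ_t²` and taking the Schur
complement of the top-left block gives
`det (K(X_{t+1}, X_{t+1}) + Σ_{t+1}) = det (K(X_t, X_t) + Σ_t) · (λ_t² + σ_t²)`, where
`σ_t² := σ²_{Σ_t}(x_t; X_t) ≥ 0` (the same Schur complement of a positive semidefinite matrix).
Hence the information gain telescopes to `½ ∑_t log (1 + u_t)` with `u_t := σ_t² / λ_t²`.
On `𝒯` we have `u_t ≤ 1`, where `u ≤ 2 log (1 + u)`, so `∑_{t ∈ 𝒯} u_t ≤ 4γ`, and Cauchy–Schwarz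
gives `(∑_{t ∈ 𝒯} σ_t)² ≤ (∑_t λ_t²) · ∑_{t ∈ 𝒯} u_t`.
-/

lemma Matrix.PosSemidef.fromBlocks_zero {ι κ R : Type*} [Fintype ι] [Fintype κ] [DecidableEq ι]
    [CommRing R] [PartialOrder R] [StarRing R] {S : Matrix ι ι R}
    (hS : S.PosSemidef) : (fromBlocks S 0 0 0 : Matrix (ι ⊕ κ) (ι ⊕ κ) R).PosSemidef := by
  convert hS.conjTranspose_mul_mul_same (fromCols (1 : Matrix ι ι R) (0 : Matrix ι κ R)) using 1
  ext (i | i) (j | j) <;> simp [fromCols, mul_apply, one_apply, apply_ite star]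

section GaussianProcess

variable {𝒳 : Type u} {k : 𝒳 → 𝒳 → ℝ} {m : ℕ}

/-- The matrix `K(X', X') + diag(S, c)` for `X' = (X, x)`, written in block form. -/
def borderedGram (k : 𝒳 → 𝒳 → ℝ) (S : Matrix (Fin m) (Fin m) ℝ) (X : Fin m → 𝒳) (x : 𝒳)
    (c : ℝ) : Matrix (Fin m ⊕ Fin 1) (Fin m ⊕ Fin 1) ℝ :=
  fromBlocks (gramMat k X + S) (replicateCol (Fin 1) (kVec k X x))
    (replicateRow (Fin 1) (kVec k X x)) (of fun _ _ => k x x + c)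

lemma borderedGram_schurComplement (S : Matrix (Fin m) (Fin m) ℝ) (X : Fin m → 𝒳) (x : 𝒳)
    (c : ℝ) :
    (of fun _ _ => k x x + c : Matrix (Fin 1) (Fin 1) ℝ) -
        replicateRow (Fin 1) (kVec k X x) * (gramMat k X + S)⁻¹ * replicateCol (Fin 1) (kVec k X x)
      = of fun _ _ => c + postVar k S X x := by
  ext
  rw [← replicateRow_vecMul, replicateRow_mul_replicateCol, postVar, dotProduct_mulVec]
  simp only [Matrix.sub_apply, of_apply]
  ring

lemma det_borderedGram {S : Matrix (Fin m) (Fin m) ℝ} {X : Fin m → 𝒳}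
    (hA : IsUnit (gramMat k X + S).det) (x : 𝒳) (c : ℝ) :
    (borderedGram k S X x c).det = (gramMat k X + S).det * (c + postVar k S X x) := by
  have := invertibleOfIsUnitDet _ hA
  rw [borderedGram, det_fromBlocks₁₁, invOf_eq_nonsing_inv, borderedGram_schurComplement,
    det_fin_one, of_apply]

lemma posSemidef_borderedGram (hk : IsKernel k) {S : Matrix (Fin m) (Fin m) ℝ}
    (hS : S.PosSemidef) (X : Fin m → 𝒳) (x : 𝒳) : (borderedGram k S X x 0).PosSemidef := by
  have hZ := (posSemidef_submatrix_equiv finSumFinEquiv).mpr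
    (hk.2 _ (Sum.elim X (fun _ : Fin 1 => x) ∘ finSumFinEquiv.symm))
  convert hZ.add hS.fromBlocks_zero using 1
  ext (i | i) (j | j) <;> simp [borderedGram, gramMat, kVec, hk.1 x, add_comm]

lemma postVar_nonneg (hk : IsKernel k) {S : Matrix (Fin m) (Fin m) ℝ} (hS : S.PosDef)
    (X : Fin m → 𝒳) (x : 𝒳) : 0 ≤ postVar k S X x := by
  have hA : (gramMat k X + S).PosDef := hS.posSemidef_add (hk.2 m X)
  have := invertibleOfIsUnitDet _ hA.det_pos.ne'.isUnit
  have hSchur := (PosDef.fromBlocks₁₁ (replicateCol (Fin 1) (kVec k X x))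
    (of fun _ _ => k x x + 0) hA).mp (by
      rw [conjTranspose_replicateCol, star_trivial]
      exact posSemidef_borderedGram hk hS.posSemidef X x)
  rw [conjTranspose_replicateCol, star_trivial, borderedGram_schurComplement] at hSchur
  simpa using hSchur.diag_nonneg (i := 0)

lemma gramMat_preT_succ_add_diagonal (hk : ∀ x y, k x y = k y x) (xs : ℕ → 𝒳) (s : ℕ → ℝ)
    (t : ℕ) :
    (gramMat k (preT xs (t + 1)) + diagonal fun i : Fin (t + 1) => s i).submatrix
        finSumFinEquiv finSumFinEquiv
      = borderedGram k (diagonal fun i : Fin t => s i) (preT xs t) (xs t) (s t) := by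
  ext (i | i) (j | j) <;>
    simp [borderedGram, gramMat, kVec, preT, diagonal_apply, Fin.ext_iff, hk (xs i)]
  all_goals omega

lemma posDef_gramMat_add_diagonal (hk : IsKernel k) (X : Fin m → 𝒳) {s : Fin m → ℝ}
    (hs : ∀ i, 0 < s i) : (gramMat k X + diagonal s).PosDef :=
  (posDef_diagonal_iff.mpr hs).posSemidef_add (hk.2 m X)

lemma det_gramMat_preT_add_diagonal (hk : IsKernel k) (xs : ℕ → 𝒳) {s : ℕ → ℝ} {T : ℕ}
    (hs : ∀ t < T, 0 < s t) :
    (gramMat k (preT xs T) + diagonal fun i : Fin T => s i).det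
      = ∏ t ∈ range T, (s t + postVar k (diagonal fun i : Fin t => s i) (preT xs t) (xs t)) := by
  induction T with
  | zero => simp
  | succ t ih =>
    have hs' : ∀ i < t, 0 < s i := fun i hi => hs i (by omega)
    rw [← det_submatrix_equiv_self finSumFinEquiv, gramMat_preT_succ_add_diagonal hk.1,
      det_borderedGram, ih hs', prod_range_succ]
    exact (posDef_gramMat_add_diagonal hk _ fun i => hs' i i.isLt).det_pos.ne'.isUnit

lemma infoGain_diagonal_eq_sum_log (hk : IsKernel k) (xs : ℕ → 𝒳) {s : ℕ → ℝ} {T : ℕ}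
    (hs : ∀ t < T, 0 < s t) :
    infoGain k (diagonal fun i : Fin T => s i) (preT xs T)
      = (1 / 2) * ∑ t ∈ range T,
          log (1 + postVar k (diagonal fun i : Fin t => s i) (preT xs t) (xs t) / s t) := by
  rw [infoGain, add_comm, det_gramMat_preT_add_diagonal hk xs hs, det_diagonal,
    Fin.prod_univ_eq_prod_range (fun t => s t), ← prod_div_distrib, log_prod]
  · refine congrArg _ (sum_congr rfl fun t ht => ?_)
    rw [add_div, div_self (hs t (mem_range.mp ht)).ne']
  · intro t ht
    have hst := hs t (mem_range.mp ht)
    have := postVar_nonneg hk (posDef_diagonal_iff.mpr fun i : Fin t =>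
      hs i (i.isLt.trans (mem_range.mp ht))) (preT xs t) (xs t)
    positivity

end GaussianProcess

lemma Real.le_two_mul_log_one_add {u : ℝ} (h0 : 0 ≤ u) (h1 : u ≤ 1) : u ≤ 2 * log (1 + u) := by
  have hlog := one_sub_inv_le_log_of_pos (by linarith : 0 < 1 + u)
  have : u ≤ 2 * (1 - (1 + u)⁻¹) := by
    field_simp
    nlinarith
  linarith

theorem sum_filter_le_two_mul_sqrt_of_half_sum_log_le {ι : Type*} (s : Finset ι) {a b : ι → ℝ}
    (ha : ∀ i ∈ s, 0 ≤ a i) (hb : ∀ i ∈ s, 0 < b i) {γ : ℝ}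
    (hγ : (1 / 2) * ∑ i ∈ s, log (1 + a i ^ 2 / b i ^ 2) ≤ γ) :
    ∑ i ∈ s with a i ≤ b i, a i ≤ 2 * √((∑ i ∈ s, b i ^ 2) * γ) := by
  set F := s.filter fun i => a i ≤ b i
  have hFs : F ⊆ s := filter_subset _ _
  have hlog : ∀ i ∈ s, 0 ≤ 2 * log (1 + a i ^ 2 / b i ^ 2) := fun i _ =>
    mul_nonneg zero_le_two (log_nonneg (le_add_of_nonneg_right (by positivity)))
  have hratio : ∑ i ∈ F, a i ^ 2 / b i ^ 2 ≤ 4 * γ := calc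
    _ ≤ ∑ i ∈ F, 2 * log (1 + a i ^ 2 / b i ^ 2) := by
      refine sum_le_sum fun i hi => le_two_mul_log_one_add (by positivity) ?_
      obtain ⟨his, hab⟩ := mem_filter.mp hi
      rw [div_le_one (pow_pos (hb i his) 2)]
      exact pow_le_pow_left₀ (ha i his) hab 2
    _ ≤ ∑ i ∈ s, 2 * log (1 + a i ^ 2 / b i ^ 2) :=
      sum_le_sum_of_subset_of_nonneg hFs fun i hi _ => hlog i hi
    _ = 4 * ((1 / 2) * ∑ i ∈ s, log (1 + a i ^ 2 / b i ^ 2)) := by rw [← mul_sum]; ring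
    _ ≤ 4 * γ := by linarith
  have hCS : (∑ i ∈ F, a i) ^ 2 ≤ (∑ i ∈ F, b i ^ 2) * ∑ i ∈ F, a i ^ 2 / b i ^ 2 := by
    have hmul : ∀ i ∈ F, b i * (a i / b i) = a i := fun i hi =>
      mul_div_cancel₀ (a i) (hb i (hFs hi)).ne'
    simpa only [sum_congr rfl hmul, div_pow] using sum_mul_sq_le_sq_mul_sq F b fun i => a i / b i
  have hsq : (∑ i ∈ F, a i) ^ 2 ≤ 2 ^ 2 * ((∑ i ∈ s, b i ^ 2) * γ) := calc
    _ ≤ (∑ i ∈ F, b i ^ 2) * ∑ i ∈ F, a i ^ 2 / b i ^ 2 := hCS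
    _ ≤ (∑ i ∈ s, b i ^ 2) * (4 * γ) := by gcongr
    _ = _ := by ring
  calc ∑ i ∈ F, a i ≤ √(2 ^ 2 * ((∑ i ∈ s, b i ^ 2) * γ)) := le_sqrt_of_sq_le hsq
    _ = 2 * √((∑ i ∈ s, b i ^ 2) * γ) := by rw [sqrt_mul (by norm_num), sqrt_sq zero_le_two]

open scoped Classical

/-- information-gain bound on accumulated posterior standard deviations. -/
theorem sum_postStd_le_sqrt_infoGain
    {𝒳 : Type u} (k : 𝒳 → 𝒳 → ℝ) (hk : IsKernel k)
    (T : ℕ) (xs : ℕ → 𝒳) (lam : ℕ → ℝ) (hpos : ∀ t < T, 0 < lam t)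
    (γ : ℝ)
    (hγ : infoGain k (Matrix.diagonal fun i : Fin T => lam i.val ^ 2) (preT xs T) ≤ γ) :
    ∑ t ∈ (Finset.range T).filter (fun t =>
        postStd k (Matrix.diagonal fun i : Fin t => lam i.val ^ 2) (preT xs t) (xs t) ≤ lam t),
        postStd k (Matrix.diagonal fun i : Fin t => lam i.val ^ 2) (preT xs t) (xs t)
      ≤ 2 * Real.sqrt ((∑ t ∈ Finset.range T, lam t ^ 2) * γ) := by
  have hvar (t : ℕ) (ht : t < T) :
      0 ≤ postVar k (diagonal fun i : Fin t => lam i.val ^ 2) (preT xs t) (xs t) :=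
    postVar_nonneg hk (posDef_diagonal_iff.mpr fun i => pow_pos (hpos i (i.isLt.trans ht)) 2) _ _
  rw [infoGain_diagonal_eq_sum_log hk xs (s := fun t => lam t ^ 2)
    fun t ht => pow_pos (hpos t ht) 2] at hγ
  refine sum_filter_le_two_mul_sqrt_of_half_sum_log_le (range T) (fun t _ => sqrt_nonneg _)
    (fun t ht => hpos t (mem_range.mp ht)) ?_
  convert hγ using 6 with t ht
  exact sq_sqrt (hvar t (mem_range.mp ht))
end
end
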